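/- Suppose the Laplace exponent φ is regularly varying at ∞ with index β ∈ (0,1). Then for every α ∈ (0,2) and every δ > 0, P(E_t > δ) = o(E[f_α(E_t) ; E_t ≤ δ]) as t ↓ 0; that is, P(E_t > δ) / E[f_α(E_t) ; E_t ≤ δ] → 0 as t ↓ 0. -/

import Mathlib

open MeasureTheory Filter Set

/-- `fα(t)`: the rate function `t^{1/α}` for `α ∈ (1,2)`, `t ln(1/t)` for `α = 1`,
and `t` for `α ∈ (0,1)`. -/
noncomputable def falpha (α t : ℝ) : ℝ :=
  if 1 < α then t ^ (1 / α) else if α = 1 then t * Real.log (1 / t) else t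

open Real Topology ProbabilityTheory

/-!
Write `ψ t = φ t⁻¹`, which tends to `∞` as `t ↓ 0`. Since `{u < E_t} ⊆ {D_u ≤ t}`, the Chernoff
bound at `λ = 1/t` gives `P(u < E_t) ≤ e · exp (-u ψ)`; for `u = δ` this is the numerator.
Conversely `{D_s ≤ t} ⊆ {s ≤ E_t}` and Markov's inequality for `1 - exp (-D_s / t)` give
`P(s ≤ E_t) ≥ 1 - 2 s ψ = 1/2` for `s = 1/(4ψ)`. As `f_α x ≥ x` on `(0, e⁻¹]` and `f_α` is bounded on
`(0, δ]`, the denominator is at least of order `1/ψ`, so the ratio is `O(ψ exp (-δ ψ)) → 0`.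
-/

lemma measurable_falpha (α : ℝ) : Measurable (falpha α) := by
  unfold falpha
  split_ifs <;> fun_prop

lemma le_falpha (α : ℝ) {x : ℝ} (hx : 0 < x) (hxe : x ≤ exp (-1)) : x ≤ falpha α x := by
  have hx1 : x ≤ 1 := hxe.trans (exp_le_one_iff.2 (by norm_num))
  unfold falpha
  split_ifs with hα hα'
  · simpa using rpow_le_rpow_of_exponent_ge hx hx1 (show 1 / α ≤ 1 by bound)
  · have : 1 ≤ log (1 / x) := by
      rw [one_div, log_inv, le_neg]
      exact (log_le_iff_le_exp hx).2 hxe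
    nlinarith
  · exact le_rfl

lemma abs_log_le_add_inv {x : ℝ} (hx : 0 < x) : |log x| ≤ x + x⁻¹ := by
  have h₁ := log_le_sub_one_of_pos hx
  have h₂ := log_le_sub_one_of_pos (inv_pos.2 hx)
  rw [log_inv] at h₂
  have := inv_pos.2 hx
  exact abs_le.2 ⟨by linarith, by linarith⟩

lemma abs_falpha_le (α : ℝ) {x : ℝ} (hx : 0 < x) : |falpha α x| ≤ x ^ 2 + x + 1 := by
  unfold falpha
  split_ifs with hα hα'
  · rw [abs_of_nonneg (by positivity)]
    have h1α : 1 / α ≤ 1 := by bound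
    rcases le_total x 1 with h | h
    · linarith [rpow_le_one hx.le h (by positivity : (0:ℝ) ≤ 1 / α), sq_nonneg x]
    · linarith [rpow_le_self_of_one_le h h1α, sq_nonneg x]
  · rw [one_div, log_inv, abs_mul, abs_neg, abs_of_pos hx]
    calc x * |log x| ≤ x * (x + x⁻¹) := by gcongr; exact abs_log_le_add_inv hx
      _ = x ^ 2 + 1 := by field_simp
      _ ≤ x ^ 2 + x + 1 := by linarith
  · rw [abs_of_pos hx]; nlinarith

section Laplace

variable {Ω : Type*} [MeasurableSpace Ω] {P : Measure Ω} {X : Ω → ℝ} {t a : ℝ}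

lemma measureReal_le_le_of_integral_exp_eq [IsFiniteMeasure P] (ht : 0 < t)
    (hL : ∫ ω, exp (-t⁻¹ * X ω) ∂P = exp (-a)) :
    P.real {ω | X ω ≤ t} ≤ exp (1 - a) := by
  -- a non-integrable function has Bochner integral `0`, so `hL` forces integrability
  have hint : Integrable (fun ω => exp (-t⁻¹ * X ω)) P :=
    Integrable.of_integral_ne_zero (hL ▸ (exp_pos _).ne')
  calc P.real {ω | X ω ≤ t} ≤ exp (-(-t⁻¹) * t) * mgf X P (-t⁻¹) :=
        measure_le_le_exp_mul_mgf t (by simpa using ht.le) hint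
    _ = exp (1 - a) := by
        rw [mgf, hL, ← exp_add, neg_neg, inv_mul_cancel₀ ht.ne', sub_eq_add_neg]

lemma measureReal_lt_le_of_integral_exp_eq [IsProbabilityMeasure P] (hX : 0 ≤ᵐ[P] X)
    (ht : 0 < t) (hL : ∫ ω, exp (-t⁻¹ * X ω) ∂P = exp (-a)) :
    P.real {ω | t < X ω} ≤ 2 * a := by
  have hint : Integrable (fun ω => exp (-t⁻¹ * X ω)) P :=
    Integrable.of_integral_ne_zero (hL ▸ (exp_pos _).ne')
  have hmarkov := mul_meas_ge_le_integral_of_nonneg (μ := P)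
    (f := fun ω => 1 - exp (-t⁻¹ * X ω))
    (hX.mono fun ω hω => sub_nonneg.2 (exp_le_one_iff.2 (by
      have := inv_pos.2 ht; simp only [Pi.zero_apply] at hω; nlinarith)))
    ((integrable_const 1).sub hint) (1 - exp (-1))
  rw [integral_sub (integrable_const 1) hint, hL, integral_const, probReal_univ, one_smul]
    at hmarkov
  have hsub : {ω | t < X ω} ⊆ {ω | 1 - exp (-1) ≤ 1 - exp (-t⁻¹ * X ω)} := by
    intro ω hω
    simp only [mem_ofPred_eq, sub_le_sub_iff_left, exp_le_exp, neg_mul, neg_le_neg_iff]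
    rw [inv_mul_eq_div, one_le_div ht]
    exact hω.le
  have hc : 1 / 2 ≤ 1 - exp (-1) := by
    rw [exp_neg]
    linarith [inv_anti₀ two_pos exp_one_gt_two.le]
  calc P.real {ω | t < X ω} ≤ 2 * ((1 - exp (-1)) * P.real {ω | t < X ω}) := by
        nlinarith [measureReal_nonneg (μ := P) (s := {ω | t < X ω})]
    _ ≤ 2 * (1 - exp (-a)) := by
        gcongr
        exact (mul_le_mul_of_nonneg_left (measureReal_mono hsub) (by linarith)).trans hmarkov
    _ ≤ 2 * a := by linarith [add_one_le_exp (-a)]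

end Laplace

noncomputable def firstPassage (d : ℝ → ℝ) (t : ℝ) : ℝ := sInf {u | 0 < u ∧ t < d u}

section FirstPassage

variable {d : ℝ → ℝ} {t u : ℝ}

lemma firstPassage_le (hu : 0 < u) (h : t < d u) : firstPassage d t ≤ u :=
  csInf_le ⟨0, fun _ hv => hv.1.le⟩ ⟨hu, h⟩

lemma le_firstPassage (hmono : MonotoneOn d (Ici 0)) (hunb : ∀ M, ∃ v, 0 ≤ v ∧ M < d v)
    (hu : 0 < u) (h : d u ≤ t) : u ≤ firstPassage d t := by
  obtain ⟨v, hv, hvt⟩ := hunb t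
  refine le_csInf ⟨v + 1, by linarith, hvt.trans_le (hmono hv (by simp; linarith) (by linarith))⟩
    fun w hw => le_of_not_gt fun hwu => ?_
  exact (hw.2.trans_le (hmono (mem_Ici.2 hw.1.le) (mem_Ici.2 hu.le) hwu.le)).not_ge h

end FirstPassage

section Integral

variable {Ω : Type*} [MeasurableSpace Ω] {P : Measure Ω} [IsFiniteMeasure P]

lemma sub_le_setIntegral_falpha (α : ℝ) {Y : Ω → ℝ} (hY : Measurable Y) {s δ' δ : ℝ}
    (hs : 0 < s) (hsδ' : s ≤ δ') (hδ'δ : δ' ≤ δ) (hδ'e : δ' ≤ exp (-1)) :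
    s * P.real {ω | s ≤ Y ω} - (s + (δ ^ 2 + δ + 1)) * P.real {ω | δ' < Y ω} ≤
      ∫ ω in {ω | 0 < Y ω ∧ Y ω ≤ δ}, falpha α (Y ω) ∂P := by
  set A := {ω | 0 < Y ω ∧ Y ω ≤ δ}
  have hA : MeasurableSet A :=
    (measurableSet_lt measurable_const hY).inter (measurableSet_le hY measurable_const)
  have hbound : ∀ ω ∈ A, |falpha α (Y ω)| ≤ δ ^ 2 + δ + 1 := fun ω hω =>
    (abs_falpha_le α hω.1).trans (by nlinarith [hω.1, hω.2])
  have hint : IntegrableOn (fun ω => falpha α (Y ω)) A P :=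
    (integrable_const (δ ^ 2 + δ + 1)).mono' ((measurable_falpha α).comp hY).aestronglyMeasurable
      (ae_restrict_of_forall_mem hA hbound)
  have hpt : ∀ ω, {ω | s ≤ Y ω}.indicator (fun _ => s) ω -
      {ω | δ' < Y ω}.indicator (fun _ => s + (δ ^ 2 + δ + 1)) ω ≤
      A.indicator (fun ω => falpha α (Y ω)) ω := by
    intro ω
    have hlow : 0 < Y ω → Y ω ≤ δ' → Y ω ≤ falpha α (Y ω) := fun h0 h1 =>
      le_falpha α h0 (h1.trans hδ'e)
    have hup : 0 < Y ω → Y ω ≤ δ → -(δ ^ 2 + δ + 1) ≤ falpha α (Y ω) := fun h0 h1 =>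
      (abs_le.1 (hbound ω ⟨h0, h1⟩)).1
    have hC : 0 ≤ δ ^ 2 + δ + 1 := by nlinarith
    simp only [indicator, mem_ofPred_eq, A]
    split_ifs <;> grind
  rw [← integral_indicator hA]
  calc _ = ∫ ω, ({ω | s ≤ Y ω}.indicator (fun _ => s) ω -
        {ω | δ' < Y ω}.indicator (fun _ => s + (δ ^ 2 + δ + 1)) ω) ∂P := by
        rw [integral_sub ((integrable_const _).indicator (measurableSet_le measurable_const hY))
          ((integrable_const _).indicator (measurableSet_lt measurable_const hY)),
          integral_indicator_const _ (measurableSet_le measurable_const hY),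
          integral_indicator_const _ (measurableSet_lt measurable_const hY)]
        simp only [smul_eq_mul, mul_comm]
    _ ≤ _ := integral_mono (((integrable_const _).indicator
          (measurableSet_le measurable_const hY)).sub ((integrable_const _).indicator
          (measurableSet_lt measurable_const hY))) ((integrable_indicator_iff hA).2 hint) hpt

end Integral

section Subordinator

variable {Ω : Type*} [MeasurableSpace Ω] {P : Measure Ω} [IsProbabilityMeasure P]
  {D E : ℝ → Ω → ℝ} {φ : ℝ → ℝ} {t : ℝ}

lemma measureReal_lt_firstPassage_le
    (hLap : ∀ u : ℝ, 0 ≤ u → ∀ l : ℝ, 0 < l → ∫ ω, exp (-l * D u ω) ∂P = exp (-u * φ l))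
    (hE : ∀ ω, E t ω = firstPassage (D · ω) t) (ht : 0 < t) {u : ℝ} (hu : 0 < u) :
    P.real {ω | u < E t ω} ≤ exp (1 - u * φ t⁻¹) := by
  refine (measureReal_mono fun ω (hω : u < E t ω) => ?_).trans
    (measureReal_le_le_of_integral_exp_eq (X := D u) ht
      (by rw [hLap u hu.le _ (inv_pos.2 ht), neg_mul]))
  exact le_of_not_gt fun h => (firstPassage_le hu h).not_gt (hE ω ▸ hω)

lemma one_sub_le_measureReal_le_firstPassage (hDnonneg : ∀ u ω, 0 ≤ D u ω)
    (hpath : ∀ᵐ ω ∂P, MonotoneOn (D · ω) (Ici 0) ∧ ∀ M, ∃ v, 0 ≤ v ∧ M < D v ω)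
    (hLap : ∀ u : ℝ, 0 ≤ u → ∀ l : ℝ, 0 < l → ∫ ω, exp (-l * D u ω) ∂P = exp (-u * φ l))
    (hE : ∀ ω, E t ω = firstPassage (D · ω) t) (ht : 0 < t) {s : ℝ} (hs : 0 < s) :
    1 - 2 * (s * φ t⁻¹) ≤ P.real {ω | s ≤ E t ω} := by
  have hcover : 1 ≤ P.real {ω | D s ω ≤ t} + P.real {ω | t < D s ω} := by
    refine le_of_eq_of_le ?_ (measureReal_union_le _ _)
    rw [← probReal_univ (μ := P)]
    congr
    ext ω
    simp [le_or_gt]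
  have htail : P.real {ω | t < D s ω} ≤ 2 * (s * φ t⁻¹) :=
    measureReal_lt_le_of_integral_exp_eq (ae_of_all _ (hDnonneg s)) ht
      (by rw [hLap s hs.le _ (inv_pos.2 ht), neg_mul])
  have hhit : P.real {ω | D s ω ≤ t} ≤ P.real {ω | s ≤ E t ω} :=
    ENNReal.toReal_mono (measure_ne_top _ _) <| measure_mono_ae <| hpath.mono
      fun ω hω h => show s ≤ E t ω from hE ω ▸ le_firstPassage hω.1 hω.2 hs h
  linarith

lemma div_le_setIntegral_falpha_firstPassage (α : ℝ) {δ' δ : ℝ}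
    (hDnonneg : ∀ u ω, 0 ≤ D u ω)
    (hpath : ∀ᵐ ω ∂P, MonotoneOn (D · ω) (Ici 0) ∧ ∀ M, ∃ v, 0 ≤ v ∧ M < D v ω)
    (hLap : ∀ u : ℝ, 0 ≤ u → ∀ l : ℝ, 0 < l → ∫ ω, exp (-l * D u ω) ∂P = exp (-u * φ l))
    (hE : ∀ ω, E t ω = firstPassage (D · ω) t) (hEmeas : Measurable (E t)) (ht : 0 < t)
    (hδ' : 0 < δ') (hδ'δ : δ' ≤ δ) (hδ'e : δ' ≤ exp (-1)) (hψ : 1 / (4 * δ') ≤ φ t⁻¹) :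
    (1 / 8 - (1 / 4 + (δ ^ 2 + δ + 1) * φ t⁻¹) * exp (1 - δ' * φ t⁻¹)) / φ t⁻¹ ≤
      ∫ ω in {ω | 0 < E t ω ∧ E t ω ≤ δ}, falpha α (E t ω) ∂P := by
  set ψ := φ t⁻¹
  have hψ0 : 0 < ψ := lt_of_lt_of_le (by positivity) hψ
  set s := 1 / (4 * ψ)
  have hs : 0 < s := by positivity
  have hsδ' : s ≤ δ' := by
    rw [div_le_iff₀ (by positivity)] at hψ ⊢
    linarith
  have hhit := one_sub_le_measureReal_le_firstPassage hDnonneg hpath hLap hE ht hs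
  have hfar := measureReal_lt_firstPassage_le hLap hE ht hδ'
  calc _ = s * (1 - 2 * (s * ψ)) - (s + (δ ^ 2 + δ + 1)) * exp (1 - δ' * ψ) := by
        simp only [s]
        field_simp
        ring
    _ ≤ s * P.real {ω | s ≤ E t ω} - (s + (δ ^ 2 + δ + 1)) * P.real {ω | δ' < E t ω} := by
        gcongr
        nlinarith
    _ ≤ _ := sub_le_setIntegral_falpha α hEmeas hs hsδ' hδ'δ hδ'e

lemma measureReal_div_setIntegral_falpha_mem_Icc (α : ℝ) {δ' δ : ℝ}
    (hDnonneg : ∀ u ω, 0 ≤ D u ω)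
    (hpath : ∀ᵐ ω ∂P, MonotoneOn (D · ω) (Ici 0) ∧ ∀ M, ∃ v, 0 ≤ v ∧ M < D v ω)
    (hLap : ∀ u : ℝ, 0 ≤ u → ∀ l : ℝ, 0 < l → ∫ ω, exp (-l * D u ω) ∂P = exp (-u * φ l))
    (hE : ∀ ω, E t ω = firstPassage (D · ω) t) (hEmeas : Measurable (E t)) (ht : 0 < t)
    (hδ' : 0 < δ') (hδ'δ : δ' ≤ δ) (hδ'e : δ' ≤ exp (-1)) (hψ : 1 / (4 * δ') ≤ φ t⁻¹)
    (hden : 0 < 1 / 8 - (1 / 4 + (δ ^ 2 + δ + 1) * φ t⁻¹) * exp (1 - δ' * φ t⁻¹)) :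
    P.real {ω | δ < E t ω} / ∫ ω in {ω | 0 < E t ω ∧ E t ω ≤ δ}, falpha α (E t ω) ∂P ∈
      Icc 0 (φ t⁻¹ * exp (1 - δ * φ t⁻¹) /
        (1 / 8 - (1 / 4 + (δ ^ 2 + δ + 1) * φ t⁻¹) * exp (1 - δ' * φ t⁻¹))) := by
  have hψ0 : 0 < φ t⁻¹ := lt_of_lt_of_le (by positivity) hψ
  have hI := div_le_setIntegral_falpha_firstPassage α hDnonneg hpath hLap hE hEmeas ht hδ'
    hδ'δ hδ'e hψ
  have hN := measureReal_lt_firstPassage_le hLap hE ht (hδ'.trans_le hδ'δ)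
  refine ⟨div_nonneg measureReal_nonneg ((div_pos hden hψ0).trans_le hI).le, ?_⟩
  calc _ ≤ exp (1 - δ * φ t⁻¹) /
        ((1 / 8 - (1 / 4 + (δ ^ 2 + δ + 1) * φ t⁻¹) * exp (1 - δ' * φ t⁻¹)) / φ t⁻¹) :=
        div_le_div₀ (exp_pos _).le hN (div_pos hden hψ0) hI
    _ = _ := by field_simp

end Subordinator

lemma tendsto_rpow_mul_exp_sub_mul_atTop (r a : ℝ) {b : ℝ} (hb : 0 < b) :
    Tendsto (fun x : ℝ => x ^ r * exp (a - b * x)) atTop (𝓝 0) := by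
  simpa [sub_eq_add_neg, exp_add, mul_left_comm] using
    (tendsto_rpow_mul_exp_neg_mul_atTop_nhds_zero r b hb).const_mul (exp a)

theorem stmt_14_general
    {Ω : Type*} [MeasurableSpace Ω] (P : Measure Ω) [IsProbabilityMeasure P]
    (D : ℝ → Ω → ℝ) (φ : ℝ → ℝ) (E : ℝ → Ω → ℝ)
    (hDnonneg : ∀ u ω, 0 ≤ D u ω)
    (hDpath : ∀ᵐ ω ∂P,
      (∀ u : ℝ, 0 ≤ u → ContinuousWithinAt (fun v => D v ω) (Set.Ici u) u) ∧
      StrictMonoOn (fun u => D u ω) (Set.Ici (0 : ℝ)) ∧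
      (∀ M : ℝ, ∃ u : ℝ, 0 ≤ u ∧ M < D u ω))
    (hφtop : Tendsto φ atTop atTop)
    (hLap : ∀ u : ℝ, 0 ≤ u → ∀ l : ℝ, 0 < l →
      ∫ ω, Real.exp (-l * D u ω) ∂P = Real.exp (-u * φ l))
    (hE : ∀ t ω, E t ω = sInf {u : ℝ | 0 < u ∧ t < D u ω})
    (hEmeas : ∀ t : ℝ, Measurable (E t))
    (α : ℝ) (δ : ℝ) (hδ : 0 < δ) :
    Tendsto
      (fun t =>
        (P {ω | δ < E t ω}).toReal /
        (∫ ω in {ω | 0 < E t ω ∧ E t ω ≤ δ}, falpha α (E t ω) ∂P))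
      (nhdsWithin 0 (Set.Ioi 0)) (nhds 0) := by
  set δ' := min δ (exp (-1))
  have hδ' : 0 < δ' := lt_min hδ (exp_pos _)
  have hψ : Tendsto (fun t : ℝ => φ t⁻¹) (𝓝[>] 0) atTop := hφtop.comp tendsto_inv_nhdsGT_zero
  have hnum : Tendsto (fun x : ℝ => x * exp (1 - δ * x)) atTop (𝓝 0) := by
    simpa using tendsto_rpow_mul_exp_sub_mul_atTop 1 1 hδ
  have hden : Tendsto (fun x => 1 / 8 - (1 / 4 + (δ ^ 2 + δ + 1) * x) * exp (1 - δ' * x))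
      atTop (𝓝 (1 / 8)) := by
    have h := ((tendsto_rpow_mul_exp_sub_mul_atTop 0 1 hδ').const_mul (1 / 4)).add
      ((tendsto_rpow_mul_exp_sub_mul_atTop 1 1 hδ').const_mul (δ ^ 2 + δ + 1))
    simpa [add_mul, mul_assoc] using tendsto_const_nhds.sub h
  have hpos : ∀ᶠ t in 𝓝[>] (0 : ℝ), t ∈ Ioi 0 := self_mem_nhdsWithin
  have hbound := (hpos.and ((hψ.eventually_ge_atTop (1 / (4 * δ'))).and
    (hψ.eventually (hden.eventually (eventually_gt_nhds (by norm_num)))))).mono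
    fun t h => measureReal_div_setIntegral_falpha_mem_Icc α hDnonneg
      (hDpath.mono fun _ h => ⟨h.2.1.monotoneOn, h.2.2⟩) hLap (hE t) (hEmeas t) h.1 hδ'
      (min_le_left _ _) (min_le_right _ _) h.2.1 h.2.2
  have hg := (hnum.div hden (by norm_num)).comp hψ
  rw [zero_div] at hg
  exact squeeze_zero' (hbound.mono fun _ h => h.1) (hbound.mono fun _ h => h.2) hg

/-- If `φ` is regularly varying at `∞` with index `β ∈ (0,1)`, then for every `α ∈ (0,2)`
and `δ > 0`, `P(E_t > δ) = o(E[fα(E_t) ; E_t ≤ δ])` as `t ↓ 0`. -/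
theorem stmt_14
    {Ω : Type*} [MeasurableSpace Ω] (P : Measure Ω) [IsProbabilityMeasure P]
    (D : ℝ → Ω → ℝ) (φ : ℝ → ℝ) (E : ℝ → Ω → ℝ)
    (hDmeas : ∀ u : ℝ, Measurable (D u))
    (hDnonneg : ∀ u ω, 0 ≤ D u ω)
    (hD0 : ∀ᵐ ω ∂P, D 0 ω = 0)
    (hDpath : ∀ᵐ ω ∂P,
      (∀ u : ℝ, 0 ≤ u → ContinuousWithinAt (fun v => D v ω) (Set.Ici u) u) ∧
      StrictMonoOn (fun u => D u ω) (Set.Ici (0 : ℝ)) ∧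
      (∀ M : ℝ, ∃ u : ℝ, 0 ≤ u ∧ M < D u ω))
    (hφpos : ∀ l : ℝ, 0 < l → 0 < φ l)
    (hφmono : StrictMonoOn φ (Set.Ioi (0 : ℝ)))
    (hφ0 : Tendsto φ (nhdsWithin 0 (Set.Ioi 0)) (nhds 0))
    (hφtop : Tendsto φ atTop atTop)
    (hLap : ∀ u : ℝ, 0 ≤ u → ∀ l : ℝ, 0 < l →
      ∫ ω, Real.exp (-l * D u ω) ∂P = Real.exp (-u * φ l))
    (hE : ∀ t ω, E t ω = sInf {u : ℝ | 0 < u ∧ t < D u ω})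
    (hEmeas : ∀ t : ℝ, Measurable (E t))
    (β : ℝ) (hβ0 : 0 < β) (hβ1 : β < 1)
    (hRV : ∀ a : ℝ, 0 < a →
      Tendsto (fun l => φ (a * l) / φ l) atTop (nhds (a ^ β)))
    (α : ℝ) (hα0 : 0 < α) (hα2 : α < 2) (δ : ℝ) (hδ : 0 < δ) :
    Tendsto
      (fun t =>
        (P {ω | δ < E t ω}).toReal /
        (∫ ω in {ω | 0 < E t ω ∧ E t ω ≤ δ}, falpha α (E t ω) ∂P))
      (nhdsWithin 0 (Set.Ioi 0)) (nhds 0) :=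
  stmt_14_general P D φ E hDnonneg hDpath hφtop hLap hE hEmeas α δ hδ
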